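/- In the Cartesian tree of an array A of distinct values, for any query range [i,j] with i ≤ j, the index of the second smallest element of A[i..j] lies either in the left inner spine or the right inner spine of the node v = RMQ(i,j). -/

import Mathlib

/-!
The root of the Cartesian tree of a list sits at the position `μ` of its minimum, with the trees
of the prefix before and the suffix after `μ` as children. If `μ` lies outside the query range,
the range lies within one child and we recurse into it. Otherwise `μ = RMQ(i, j)`;
if the second minimum `s` lies left of `μ`, it is the minimum of the prefix from `s` on, and a
minimum over an upward-closed set of indices lies on the right spine of the Cartesian tree (by
the same recursion), i.e. on the left inner spine of `μ`. The other side is symmetric.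

Ranges are generalized to order-connected index sets, which survive the index shift into the
right subtree; the second minimum is then the minimum over the set with `RMQ(i, j)` removed.
-/

inductive BT where
  | leaf : BT
  | node : BT → BT → BT
deriving DecidableEq

namespace BT

/-- Number of nodes. -/
def size : BT → ℕ
  | leaf => 0
  | node l r => l.size + r.size + 1

/-- Inorder list of node positions (paths from the root; `false` = left step). -/
def inList : BT → List (List Bool)
  | leaf => []
  | node l r => (l.inList).map (List.cons false) ++ [] :: (r.inList).map (List.cons true)

/-- Preorder list of node positions. -/
def preList : BT → List (List Bool)
  | leaf => []
  | node l r => [] :: ((l.preList).map (List.cons false) ++ (r.preList).map (List.cons true))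

/-- Subtree rooted at a given position, if the position is valid. -/
def subtree? : BT → List Bool → Option BT
  | t, [] => some t
  | leaf, _ :: _ => none
  | node l r, b :: p => if b then r.subtree? p else l.subtree? p

/-- Size of the left spine (maximal path following left children, top node included). -/
def Lspine : BT → ℕ
  | leaf => 0
  | node l _ => l.Lspine + 1

/-- Size of the right spine. -/
def Rspine : BT → ℕ
  | leaf => 0
  | node _ r => r.Rspine + 1

/-- Size of the left inner spine of the root: right spine of the left child. -/
def lv : BT → ℕ
  | leaf => 0
  | node l _ => l.Rspine

/-- Size of the right inner spine of the root: left spine of the right child. -/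
def rv : BT → ℕ
  | leaf => 0
  | node _ r => r.Lspine

/-- Sum of `f` over all (sub)trees rooted at nodes of the tree. -/
def sumNodes (f : BT → ℕ) : BT → ℕ
  | leaf => 0
  | node l r => f (node l r) + sumNodes f l + sumNodes f r

/-- Number of leaf nodes (nodes with no children). -/
def leaves : BT → ℕ
  | leaf => 0
  | node leaf leaf => 1
  | node l r => leaves l + leaves r

end BT

/-- Longest common prefix of two paths: the LCA of two positions in a binary tree. -/
def lcp : List Bool → List Bool → List Bool
  | a :: p, b :: q => if a = b then a :: lcp p q else []
  | _, _ => []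

/-- Index of the minimum element of a list (0 if empty). -/
def minIdx {α : Type*} [LinearOrder α] (l : List α) : ℕ :=
  match l.argmin id with
  | none => 0
  | some a => l.idxOf a

/-- Cartesian tree construction with fuel. -/
def cartesianAux {α : Type*} [LinearOrder α] : ℕ → List α → BT
  | 0, _ => .leaf
  | _ + 1, [] => .leaf
  | n + 1, l@(_ :: _) =>
      .node (cartesianAux n (l.take (minIdx l))) (cartesianAux n (l.drop (minIdx l + 1)))

/-- The Cartesian tree of a list: root at the position of the minimum,
recursively built on the prefix before and the suffix after the minimum. -/
def cartesian {α : Type*} [LinearOrder α] (l : List α) : BT :=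
  cartesianAux l.length l

/-- `k` is the position of the minimum of `A` on the range `[i, j]`. -/
def isArgmin {α : Type*} [LinearOrder α] {n : ℕ} (A : Fin n → α) (i j k : Fin n) : Prop :=
  i ≤ k ∧ k ≤ j ∧ ∀ m, i ≤ m → m ≤ j → A k ≤ A m

/-- `k` is the position of the second smallest element of `A` on the range `[i, j]`. -/
def isSecondMin {α : Type*} [LinearOrder α] {n : ℕ} (A : Fin n → α) (i j k : Fin n) : Prop :=
  i ≤ k ∧ k ≤ j ∧
    ∃ m, isArgmin A i j m ∧ k ≠ m ∧ ∀ l, i ≤ l → l ≤ j → l ≠ m → A k ≤ A l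

/-- The node with inorder number `i` in `t` has a left child. -/
def hasLeftChildAt (t : BT) (i : ℕ) : Prop :=
  ∃ (p : List Bool) (ll lr r : BT),
    t.inList[i]? = some p ∧ t.subtree? p = some (.node (.node ll lr) r)

namespace BT

lemma length_inList (t : BT) : t.inList.length = t.size := by
  induction t with
  | leaf => rfl
  | node l r ihl ihr => simp [inList, size, ihl, ihr]; omega

lemma inList_node_getElem?_of_lt {l r : BT} {k : ℕ} (hk : k < l.size) :
    (node l r).inList[k]? = l.inList[k]?.map (false :: ·) := by
  rw [inList, List.getElem?_append_left (by simp [length_inList, hk]), List.getElem?_map]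

lemma inList_node_getElem?_size (l r : BT) : (node l r).inList[l.size]? = some [] := by
  simp [inList, length_inList]

lemma inList_node_getElem?_of_gt {l r : BT} {k : ℕ} (hk : l.size < k) :
    (node l r).inList[k]? = r.inList[k - (l.size + 1)]?.map (true :: ·) := by
  rw [inList, List.getElem?_append_right (by simp [length_inList]; omega)]
  obtain ⟨d, rfl⟩ := Nat.exists_eq_add_of_lt hk
  simp [length_inList, show l.size + d + 1 - l.size = d + 1 by omega]

end BT

section CartesianTree

variable {α : Type*}

/-- Out-of-range indices read as `⊤`, so they never affect a minimum. -/
def getOrTop (L : List α) (m : ℕ) : WithTop α :=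
  if h : m < L.length then (L[m] : WithTop α) else ⊤

lemma getOrTop_of_length_le {L : List α} {m : ℕ} (h : L.length ≤ m) : getOrTop L m = ⊤ :=
  dif_neg h.not_gt

lemma getOrTop_take (L : List α) (n m : ℕ) :
    getOrTop (L.take n) m = if m < n then getOrTop L m else ⊤ := by
  unfold getOrTop
  by_cases hmn : m < n <;> by_cases hmL : m < L.length <;> simp [hmn, hmL]

lemma getOrTop_drop (L : List α) (n m : ℕ) : getOrTop (L.drop n) m = getOrTop L (n + m) := by
  unfold getOrTop
  by_cases hmL : n + m < L.length
  · simp [hmL, show m < L.length - n by omega]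
  · simp [hmL, show ¬ m < L.length - n by omega]

lemma getOrTop_ofFn {n : ℕ} (A : Fin n → α) {m : ℕ} (hm : m < n) :
    getOrTop (List.ofFn A) m = A ⟨m, hm⟩ := by
  simp [getOrTop, hm]

lemma eq_of_getOrTop_eq {L : List α} (hL : L.Nodup) {s m : ℕ} (hs : s < L.length)
    (h : getOrTop L s = getOrTop L m) : s = m := by
  by_cases hm : m < L.length
  · simp only [getOrTop, hs, hm, dite_true, WithTop.coe_inj] at h
    exact (hL.getElem_inj_iff).mp h
  · simp [getOrTop, hs, hm] at h

variable [LinearOrder α]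

lemma minIdx_lt_length {L : List α} (hL : L ≠ []) : minIdx L < L.length := by
  unfold minIdx
  cases hm : L.argmin id with
  | none => exact absurd (List.argmin_eq_none.mp hm) hL
  | some a => simpa using List.idxOf_lt_length_iff.mpr (List.argmin_mem hm)

lemma getOrTop_minIdx_le (L : List α) (m : ℕ) : getOrTop L (minIdx L) ≤ getOrTop L m := by
  by_cases hm : m < L.length
  · have hL : L ≠ [] := List.ne_nil_of_length_pos (by omega)
    obtain ⟨a, ha⟩ : ∃ a, L.argmin id = some a :=
      Option.ne_none_iff_exists'.mp (mt List.argmin_eq_none.mp hL)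
    have hidx : minIdx L = L.idxOf a := by simp [minIdx, ha]
    have hlt : L.idxOf a < L.length := List.idxOf_lt_length_iff.mpr (List.argmin_mem ha)
    simp only [getOrTop, hidx, hlt, hm, dite_true, List.getElem_idxOf, WithTop.coe_le_coe]
    exact List.le_of_mem_argmin (L.getElem_mem hm) ha
  · simp [getOrTop_of_length_le (not_lt.mp hm)]

lemma cartesianAux_congr {f g : ℕ} {L : List α} (hf : L.length ≤ f) (hg : L.length ≤ g) :
    cartesianAux f L = cartesianAux g L := by
  induction f generalizing g L with
  | zero =>
    obtain rfl := List.eq_nil_of_length_eq_zero (Nat.le_zero.mp hf)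
    cases g <;> rfl
  | succ f ih =>
    rcases L with _ | ⟨x, xs⟩
    · cases g <;> rfl
    rcases g with _ | g
    · simp at hg
    have hμ := minIdx_lt_length (List.cons_ne_nil x xs)
    simp only [List.length_cons] at hf hg hμ
    simp only [cartesianAux]
    rw [ih (g := g) (by simp; omega) (by simp; omega),
      ih (g := g) (by simp; omega) (by simp; omega)]

lemma cartesian_of_ne_nil {L : List α} (hL : L ≠ []) :
    cartesian L = .node (cartesian (L.take (minIdx L))) (cartesian (L.drop (minIdx L + 1))) := by
  obtain ⟨x, xs, rfl⟩ := List.exists_cons_of_ne_nil hL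
  have hμ := minIdx_lt_length hL
  simp only [List.length_cons] at hμ
  simp only [cartesian, List.length_cons, cartesianAux]
  exact congrArg₂ BT.node (cartesianAux_congr (by simp only [List.length_take]; omega) le_rfl)
    (cartesianAux_congr (by simp only [List.length_drop, List.length_cons]; omega) le_rfl)

@[elab_as_elim]
theorem cartesian_induction {motive : List α → Prop} (nil : motive [])
    (step : ∀ L, L ≠ [] → motive (L.take (minIdx L)) → motive (L.drop (minIdx L + 1)) →
      motive L)
    (L : List α) : motive L := by
  induction hn : L.length using Nat.strong_induction_on generalizing L with
  | _ n ih =>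
    rcases eq_or_ne L [] with rfl | hL
    · exact nil
    have hμ := minIdx_lt_length hL
    exact step L hL (ih _ (by simp; omega) _ rfl) (ih _ (by simp; omega) _ rfl)

lemma size_cartesian (L : List α) : (cartesian L).size = L.length := by
  induction L using cartesian_induction with
  | nil => rfl
  | step L hL ihl ihr =>
    have hμ := minIdx_lt_length hL
    rw [cartesian_of_ne_nil hL, BT.size, ihl, ihr]
    simp only [List.length_take, List.length_drop]
    omega

lemma size_cartesian_take_minIdx (L : List α) :
    (cartesian (L.take (minIdx L))).size = minIdx L := by
  rcases eq_or_ne L [] with rfl | hL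
  · rfl
  · simpa [size_cartesian] using (minIdx_lt_length hL).le

lemma inList_cartesian_minIdx {L : List α} (hL : L ≠ []) :
    (cartesian L).inList[minIdx L]? = some [] := by
  rw [cartesian_of_ne_nil hL]
  convert BT.inList_node_getElem?_size _ _ using 3
  exact (size_cartesian_take_minIdx L).symm

lemma inList_cartesian_of_lt {L : List α} (hL : L ≠ []) {s : ℕ} (hs : s < minIdx L) :
    (cartesian L).inList[s]? = (cartesian (L.take (minIdx L))).inList[s]?.map (false :: ·) := by
  rw [cartesian_of_ne_nil hL,
    BT.inList_node_getElem?_of_lt (by rwa [size_cartesian_take_minIdx])]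

lemma inList_cartesian_of_gt {L : List α} (hL : L ≠ []) {s : ℕ} (hs : minIdx L < s) :
    (cartesian L).inList[s]? =
      (cartesian (L.drop (minIdx L + 1))).inList[s - (minIdx L + 1)]?.map (true :: ·) := by
  rw [cartesian_of_ne_nil hL,
    BT.inList_node_getElem?_of_gt (by rwa [size_cartesian_take_minIdx]), size_cartesian_take_minIdx]

structure IsMinIdx (L : List α) (S : Set ℕ) (s : ℕ) : Prop where
  lt_length : s < L.length
  mem : s ∈ S
  isMinOn : IsMinOn (getOrTop L) S s

namespace IsMinIdx

variable {L : List α} {S T : Set ℕ} {s : ℕ}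

lemma mono (h : IsMinIdx L S s) (hs : s ∈ T) (hT : ∀ m < L.length, m ∈ T → m ∈ S) :
    IsMinIdx L T s := by
  refine ⟨h.lt_length, hs, isMinOn_iff.mpr fun m hm => ?_⟩
  by_cases hmL : m < L.length
  · exact h.isMinOn (hT m hmL hm)
  · simp [getOrTop_of_length_le (not_lt.mp hmL)]

lemma take (h : IsMinIdx L S s) {n : ℕ} (hn : s < n) : IsMinIdx (L.take n) S s := by
  refine ⟨by simp [h.lt_length, hn], h.mem, isMinOn_iff.mpr fun m hm => ?_⟩
  simp only [getOrTop_take, hn, if_true]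
  split_ifs
  · exact h.isMinOn hm
  · exact le_top

lemma drop (h : IsMinIdx L S s) {n : ℕ} (hn : n ≤ s) :
    IsMinIdx (L.drop n) ((n + ·) ⁻¹' S) (s - n) := by
  have hs : n + (s - n) = s := by omega
  have hsL := h.lt_length
  refine ⟨by simp only [List.length_drop]; omega, by simp [hs, h.mem], ?_⟩
  rw [show getOrTop (L.drop n) = getOrTop L ∘ (n + ·) from funext (getOrTop_drop L n)]
  exact h.isMinOn.comp_mapsTo (Set.mapsTo_preimage (n + ·) S) hs

lemma eq_minIdx (hL : L.Nodup) (h : IsMinIdx L S s) (hμ : minIdx L ∈ S) : s = minIdx L :=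
  eq_of_getOrTop_eq hL h.lt_length (le_antisymm (h.isMinOn hμ) (getOrTop_minIdx_le L s))

end IsMinIdx

theorem exists_inList_cartesian_eq_replicate_true {L : List α} (hL : L.Nodup) {S : Set ℕ}
    (hS : IsUpperSet S) {s : ℕ} (h : IsMinIdx L S s) :
    ∃ m, (cartesian L).inList[s]? = some (List.replicate m true) := by
  induction L using cartesian_induction generalizing S s with
  | nil => exact absurd h.lt_length (Nat.not_lt_zero s)
  | step L hne _ ihr =>
    by_cases hμ : minIdx L ∈ S
    · obtain rfl := h.eq_minIdx hL hμ
      exact ⟨0, inList_cartesian_minIdx hne⟩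
    · have hμs : minIdx L < s := lt_of_not_ge fun hsμ => hμ (hS hsμ h.mem)
      obtain ⟨m, hm⟩ := ihr (hL.sublist (List.drop_sublist _ _))
        (hS.preimage fun _ _ hab => Nat.add_le_add_left hab _) (h.drop hμs)
      exact ⟨m + 1, by rw [inList_cartesian_of_gt hne hμs, hm]; rfl⟩

theorem exists_inList_cartesian_eq_replicate_false {L : List α} (hL : L.Nodup) {S : Set ℕ}
    (hS : IsLowerSet S) {s : ℕ} (h : IsMinIdx L S s) :
    ∃ m, (cartesian L).inList[s]? = some (List.replicate m false) := by
  induction L using cartesian_induction generalizing S s with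
  | nil => exact absurd h.lt_length (Nat.not_lt_zero s)
  | step L hne ihl _ =>
    by_cases hμ : minIdx L ∈ S
    · obtain rfl := h.eq_minIdx hL hμ
      exact ⟨0, inList_cartesian_minIdx hne⟩
    · have hsμ : s < minIdx L := lt_of_not_ge fun hμs => hμ (hS hμs h.mem)
      obtain ⟨m, hm⟩ := ihl (hL.sublist (List.take_sublist _ _)) hS (h.take hsμ)
      exact ⟨m + 1, by rw [inList_cartesian_of_lt hne hsμ, hm]; rfl⟩

def OnInnerSpine (p q : List Bool) : Prop :=
  (∃ m, q = p ++ false :: List.replicate m true) ∨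
    (∃ m, q = p ++ true :: List.replicate m false)

lemma OnInnerSpine.cons {p q : List Bool} (b : Bool) (h : OnInnerSpine p q) :
    OnInnerSpine (b :: p) (b :: q) := by
  rcases h with ⟨m, rfl⟩ | ⟨m, rfl⟩
  · exact Or.inl ⟨m, rfl⟩
  · exact Or.inr ⟨m, rfl⟩

theorem onInnerSpine_nil_of_isMinIdx {L : List α} (hL : L.Nodup) (hne : L ≠ []) {S : Set ℕ}
    (hS : S.OrdConnected) (hμ : minIdx L ∈ S) {s : ℕ} (hs : IsMinIdx L (S \ {minIdx L}) s)
    {q : List Bool} (hq : (cartesian L).inList[s]? = some q) : OnInnerSpine [] q := by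
  obtain ⟨hsS, hsμ⟩ := hs.mem
  rcases lt_or_gt_of_ne hsμ with hlt | hgt
  · rw [inList_cartesian_of_lt hne hlt] at hq
    obtain ⟨q', hq', rfl⟩ := Option.map_eq_some_iff.mp hq
    have hs' : IsMinIdx (L.take (minIdx L)) (Set.Ici s) s :=
      (hs.take hlt).mono (Set.mem_Ici.mpr le_rfl) fun m hm hsm => by
        rw [List.length_take] at hm
        have hmμ : m < minIdx L := (lt_min_iff.mp hm).1
        exact ⟨hS.out hsS hμ ⟨hsm, hmμ.le⟩, hmμ.ne⟩
    obtain ⟨m, hm⟩ := exists_inList_cartesian_eq_replicate_true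
      (hL.sublist (List.take_sublist _ _)) (isUpperSet_Ici s) hs'
    exact Or.inl ⟨m, by simpa [hm] using hq'.symm⟩
  · rw [inList_cartesian_of_gt hne hgt] at hq
    obtain ⟨q', hq', rfl⟩ := Option.map_eq_some_iff.mp hq
    have hs' :
        IsMinIdx (L.drop (minIdx L + 1)) (Set.Iic (s - (minIdx L + 1))) (s - (minIdx L + 1)) :=
      (hs.drop hgt).mono (Set.mem_Iic.mpr le_rfl) fun m _ hms => by
        have hms : m ≤ s - (minIdx L + 1) := hms
        show minIdx L + 1 + m ∈ S \ {minIdx L}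
        exact ⟨hS.out hμ hsS ⟨by omega, by omega⟩,
          Set.mem_singleton_iff.not.mpr (by omega)⟩
    obtain ⟨m, hm⟩ := exists_inList_cartesian_eq_replicate_false
      (hL.sublist (List.drop_sublist _ _)) (isLowerSet_Iic _) hs'
    exact Or.inr ⟨m, by simpa [hm] using hq'.symm⟩

theorem onInnerSpine_of_isMinIdx {L : List α} (hL : L.Nodup) {S : Set ℕ} (hS : S.OrdConnected)
    {k s : ℕ} (hk : IsMinIdx L S k) (hs : IsMinIdx L (S \ {k}) s) {p q : List Bool}
    (hp : (cartesian L).inList[k]? = some p) (hq : (cartesian L).inList[s]? = some q) :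
    OnInnerSpine p q := by
  induction L using cartesian_induction generalizing S k s p q with
  | nil => exact absurd hk.lt_length (Nat.not_lt_zero k)
  | step L hne ihl ihr =>
    by_cases hμ : minIdx L ∈ S
    · obtain rfl := hk.eq_minIdx hL hμ
      obtain rfl : p = [] := Option.some.inj (hp.symm.trans (inList_cartesian_minIdx hne))
      exact onInnerSpine_nil_of_isMinIdx hL hne hS hμ hs hq
    rcases lt_or_gt_of_ne (ne_of_mem_of_not_mem hk.mem hμ) with hkμ | hμk
    · have hS_lt : ∀ m ∈ S, m < minIdx L := fun m hm =>
        lt_of_not_ge fun h => hμ (hS.out hk.mem hm ⟨hkμ.le, h⟩)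
      rw [inList_cartesian_of_lt hne hkμ] at hp
      rw [inList_cartesian_of_lt hne (hS_lt s hs.mem.1)] at hq
      obtain ⟨p', hp', rfl⟩ := Option.map_eq_some_iff.mp hp
      obtain ⟨q', hq', rfl⟩ := Option.map_eq_some_iff.mp hq
      exact (ihl (hL.sublist (List.take_sublist _ _)) hS (hk.take hkμ)
        (hs.take (hS_lt s hs.mem.1)) hp' hq').cons false
    · have hS_gt : ∀ m ∈ S, minIdx L < m := fun m hm =>
        lt_of_not_ge fun h => hμ (hS.out hm hk.mem ⟨h, hμk.le⟩)
      rw [inList_cartesian_of_gt hne hμk] at hp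
      rw [inList_cartesian_of_gt hne (hS_gt s hs.mem.1)] at hq
      obtain ⟨p', hp', rfl⟩ := Option.map_eq_some_iff.mp hp
      obtain ⟨q', hq', rfl⟩ := Option.map_eq_some_iff.mp hq
      have hshift : (minIdx L + 1 + ·) ⁻¹' (S \ {k}) =
          (minIdx L + 1 + ·) ⁻¹' S \ {k - (minIdx L + 1)} := by
        ext m
        simp only [Set.mem_preimage, Set.mem_sdiff, Set.mem_singleton_iff]
        exact and_congr_right fun _ => by omega
      have hs' := hs.drop (hS_gt s hs.mem.1)
      rw [hshift] at hs'
      have hS' := hS.preimage_mono fun _ _ hab => Nat.add_le_add_left hab (minIdx L + 1)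
      exact (ihr (hL.sublist (List.drop_sublist _ _)) hS' (hk.drop hμk) hs' hp' hq').cons true

lemma isMinIdx_ofFn {n : ℕ} {A : Fin n → α} {S : Set ℕ} {s : Fin n} (hs : (s : ℕ) ∈ S)
    (h : ∀ m : Fin n, (m : ℕ) ∈ S → A s ≤ A m) : IsMinIdx (List.ofFn A) S s := by
  refine ⟨by simp, hs, isMinOn_iff.mpr fun m hm => ?_⟩
  by_cases hmn : m < n
  · rw [getOrTop_ofFn A s.2, getOrTop_ofFn A hmn]
    exact WithTop.coe_le_coe.mpr (h ⟨m, hmn⟩ hm)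
  · rw [getOrTop_of_length_le (L := List.ofFn A) (m := m) (by simpa using hmn)]
    exact le_top

variable {n : ℕ} {A : Fin n → α} {i j k s : Fin n}

lemma isArgmin.isMinIdx_ofFn (hk : isArgmin A i j k) :
    IsMinIdx (List.ofFn A) (Set.Icc i j) k :=
  _root_.isMinIdx_ofFn ⟨hk.1, hk.2.1⟩ fun m hm => hk.2.2 m hm.1 hm.2

lemma isSecondMin.isMinIdx_ofFn (hA : Function.Injective A) (hk : isArgmin A i j k)
    (hs : isSecondMin A i j s) : IsMinIdx (List.ofFn A) (Set.Icc i j \ {(k : ℕ)}) s := by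
  obtain ⟨hi, hj, m, hm, hsm, hmin⟩ := hs
  obtain rfl : m = k := hA (le_antisymm (hm.2.2 k hk.1 hk.2.1) (hk.2.2 m hm.1 hm.2.1))
  exact _root_.isMinIdx_ofFn ⟨⟨hi, hj⟩, fun h => hsm (Fin.ext h)⟩
    fun l hl => hmin l hl.1.1 hl.1.2 fun h => hl.2 (congrArg Fin.val h)

end CartesianTree

theorem stmt9_general {α : Type*} [LinearOrder α] {n : ℕ} (A : Fin n → α)
    (hA : Function.Injective A) (i j k s : Fin n)
    (hk : isArgmin A i j k) (hs : isSecondMin A i j s)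
    (p q : List Bool)
    (hp : (cartesian (List.ofFn A)).inList[(k : ℕ)]? = some p)
    (hq : (cartesian (List.ofFn A)).inList[(s : ℕ)]? = some q) :
    (∃ m : ℕ, q = p ++ false :: List.replicate m true) ∨
    (∃ m : ℕ, q = p ++ true :: List.replicate m false) :=
  onInnerSpine_of_isMinIdx (List.nodup_ofFn.mpr hA) Set.ordConnected_Icc hk.isMinIdx_ofFn
    (hs.isMinIdx_ofFn hA hk) hp hq

/-- In the Cartesian tree of an array of distinct values, the index of the second
smallest element of `A[i..j]` lies on the left inner spine or the right inner spine of
the node `k = RMQ(i,j)` (whose position is `p`). -/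
theorem stmt9 {α : Type*} [LinearOrder α] {n : ℕ} (A : Fin n → α)
    (hA : Function.Injective A) (i j k s : Fin n) (hij : i < j)
    (hk : isArgmin A i j k) (hs : isSecondMin A i j s)
    (p q : List Bool)
    (hp : (cartesian (List.ofFn A)).inList[(k : ℕ)]? = some p)
    (hq : (cartesian (List.ofFn A)).inList[(s : ℕ)]? = some q) :
    (∃ m : ℕ, q = p ++ false :: List.replicate m true) ∨
    (∃ m : ℕ, q = p ++ true :: List.replicate m false) :=
  stmt9_general A hA i j k s hk hs p q hp hq
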